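/- arXiv:cs/0007019 — 3 statements merged into one kernel-verified Lean document; each statement's English description precedes it below -/
import Mathlib

section
/- Let v₁, v₂, v₃ ∈ ℝ³ be the vertices of an equilateral triangle, and let v₄ ∈ ℝ³ be a point not in the affine span of v₁, v₂, v₃ that is equidistant from v₁, v₂, v₃. Set ε = ∠(v₁, v₄, v₂). Then ∠(v₁, v₄, v₂) = ∠(v₂, v₄, v₃) = ∠(v₃, v₄, v₁) = ε, the angle deficit at v₄ equals 2π − 3ε, and the angle deficit at each base vertex vᵢ (i = 1, 2, 3) equals 2π/3 + ε. Consequently, if 0 < ε < π/3 then v₄ is the unique vertex of the tetrahedron with angle deficit ≥ π; in particular there exist four affinely independent points in ℝ³ such that exactly one of them has angle deficit ≥ π. -/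
open EuclideanGeometry Real

/-!
Each lateral face is isosceles with apex `v₄`, and by SSS the three lateral faces are congruent,
so all apex angles equal `ε` and every base angle of a lateral face is `(π - ε) / 2`. A base
vertex thus carries the face angles `π / 3`, `(π - ε) / 2`, `(π - ε) / 2`, of sum `4π/3 - ε`.
For the example put the apex at the origin over the base `(1,2,2), (2,1,2), (2,2,1)`: the base
side `√2` is shorter than the lateral edge `3`, which forces `ε < π / 3`.
-/

section

variable {V P : Type*} [NormedAddCommGroup V] [InnerProductSpace ℝ V] [MetricSpace P]
  [NormedAddTorsor V P] {a b c d : P}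

theorem angle_eq_of_side_side_side {a' b' c' : P} (h₁ : dist a b = dist a' b')
    (h₂ : dist b c = dist b' c') (h₃ : dist c a = dist c' a') : ∠ a b c = ∠ a' b' c' :=
  angle_eq_of_congruent (side_side_side h₁ h₂ h₃) 0 1 2

theorem angle_eq_pi_div_three_of_dist_eq (hab : a ≠ b) (h₁ : dist a b = dist b c)
    (h₂ : dist b c = dist c a) : ∠ b a c = π / 3 := by
  have hsum := angle_add_angle_add_angle_eq_pi c hab
  have hc : ∠ b a c = ∠ a c b := by
    apply angle_eq_of_side_side_side <;>
      linarith [dist_comm a b, dist_comm b c, dist_comm c a]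
  have hb : ∠ b a c = ∠ c b a := by
    apply angle_eq_of_side_side_side <;>
      linarith [dist_comm a b, dist_comm b c, dist_comm c a]
  linarith

theorem angle_eq_pi_sub_angle_div_two_of_dist_eq (hab : a ≠ b) (h : dist d a = dist d b) :
    ∠ d a b = (π - ∠ a d b) / 2 := by
  have hsum := angle_add_angle_add_angle_eq_pi d hab
  have hiso := angle_eq_angle_of_dist_eq h
  rw [angle_comm b a d] at hsum
  linarith

theorem angle_lt_pi_div_three_of_dist_lt (h : dist d a = dist d b) (hab : dist a b < dist d a) :
    ∠ a d b < π / 3 := by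
  have hlaw := law_cos a d b
  rw [dist_comm a d, dist_comm b d, ← h] at hlaw
  have hr : 0 < dist d a := dist_nonneg.trans_lt hab
  have hcos : 1 / 2 < cos (∠ a d b) := by nlinarith [dist_nonneg (x := a) (y := b)]
  by_contra! hle
  have := cos_le_cos_of_nonneg_of_le_pi (by positivity) (angle_le_pi a d b) hle
  rw [cos_pi_div_three] at this
  linarith

theorem angle_add_angle_add_angle_of_equilateral_of_dist_eq (hab : a ≠ b)
    (h₁ : dist a b = dist b c) (h₂ : dist b c = dist c a) (hb : dist d a = dist d b)
    (hc : dist d a = dist d c) :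
    ∠ b a c + ∠ b a d + ∠ c a d = 4 * π / 3 - ∠ a d b := by
  have hac : a ≠ c := by
    rw [← dist_pos, dist_comm, ← h₂, ← h₁]; exact dist_pos.2 hab
  have hapex : ∠ a d c = ∠ a d b := by
    apply angle_eq_of_side_side_side <;> linarith [dist_comm a b, dist_comm c a, dist_comm d a]
  rw [angle_eq_pi_div_three_of_dist_eq hab h₁ h₂, angle_comm b a d, angle_comm c a d,
    angle_eq_pi_sub_angle_div_two_of_dist_eq hab hb,
    angle_eq_pi_sub_angle_div_two_of_dist_eq hac hc, hapex]
  ring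

theorem spike_angles {v₁ v₂ v₃ v₄ : P} (h₁₂ : v₁ ≠ v₂) (h₁ : dist v₁ v₂ = dist v₂ v₃)
    (h₂ : dist v₂ v₃ = dist v₃ v₁) (h₄₁ : dist v₄ v₁ = dist v₄ v₂)
    (h₄₂ : dist v₄ v₂ = dist v₄ v₃) :
    ∠ v₂ v₄ v₃ = ∠ v₁ v₄ v₂ ∧ ∠ v₃ v₄ v₁ = ∠ v₁ v₄ v₂ ∧
    ∠ v₂ v₁ v₃ + ∠ v₂ v₁ v₄ + ∠ v₃ v₁ v₄ = 4 * π / 3 - ∠ v₁ v₄ v₂ ∧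
    ∠ v₁ v₂ v₃ + ∠ v₁ v₂ v₄ + ∠ v₃ v₂ v₄ = 4 * π / 3 - ∠ v₁ v₄ v₂ ∧
    ∠ v₁ v₃ v₂ + ∠ v₁ v₃ v₄ + ∠ v₂ v₃ v₄ = 4 * π / 3 - ∠ v₁ v₄ v₂ := by
  have := dist_comm v₁ v₂
  have := dist_comm v₂ v₃
  have := dist_comm v₃ v₁
  have h₃₁ : v₃ ≠ v₁ := by rw [← dist_pos]; linarith [dist_pos.2 h₁₂]
  have apex₂₃ : ∠ v₂ v₄ v₃ = ∠ v₁ v₄ v₂ := by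
    apply angle_eq_of_side_side_side <;> linarith [dist_comm v₂ v₄, dist_comm v₁ v₄]
  have apex₃₁ : ∠ v₃ v₄ v₁ = ∠ v₁ v₄ v₂ := by
    apply angle_eq_of_side_side_side <;> linarith [dist_comm v₃ v₄, dist_comm v₁ v₄]
  refine ⟨apex₂₃, apex₃₁, angle_add_angle_add_angle_of_equilateral_of_dist_eq h₁₂ h₁ h₂ h₄₁
    (h₄₁.trans h₄₂), ?_, ?_⟩
  · rw [angle_add_angle_add_angle_of_equilateral_of_dist_eq h₁₂.symm (by linarith) (by linarith)
      h₄₁.symm h₄₂, angle_comm]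
  · rw [angle_add_angle_add_angle_of_equilateral_of_dist_eq h₃₁ (by linarith) (by linarith)
      (by linarith) h₄₂.symm, apex₃₁]

end

noncomputable def spikeTetrahedron : Fin 4 → EuclideanSpace ℝ (Fin 3) :=
  ![!₂[1, 2, 2], !₂[2, 1, 2], !₂[2, 2, 1], 0]

lemma affineIndependent_spikeTetrahedron : AffineIndependent ℝ spikeTetrahedron := by
  rw [affineIndependent_iff_of_fintype]
  intro w hw hv
  rw [Finset.weightedVSub_eq_linear_combination _ hw] at hv
  have h₀ := congrArg (· 0) hv
  have h₁ := congrArg (· 1) hv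
  have h₂ := congrArg (· 2) hv
  simp [spikeTetrahedron, Fin.sum_univ_four] at h₀ h₁ h₂ hw
  intro i
  fin_cases i <;> simp <;> linarith

lemma dist_spikeTetrahedron_base :
    dist (spikeTetrahedron 0) (spikeTetrahedron 1) = √2 ∧
    dist (spikeTetrahedron 1) (spikeTetrahedron 2) = √2 ∧
    dist (spikeTetrahedron 2) (spikeTetrahedron 0) = √2 := by
  refine ⟨?_, ?_, ?_⟩ <;>
    simp [spikeTetrahedron, EuclideanSpace.dist_eq, Fin.sum_univ_three, Real.dist_eq] <;> norm_num

lemma dist_spikeTetrahedron_apex :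
    dist (spikeTetrahedron 3) (spikeTetrahedron 0) = 3 ∧
    dist (spikeTetrahedron 3) (spikeTetrahedron 1) = 3 ∧
    dist (spikeTetrahedron 3) (spikeTetrahedron 2) = 3 := by
  refine ⟨?_, ?_, ?_⟩ <;>
    simp [spikeTetrahedron, EuclideanSpace.dist_eq, Fin.sum_univ_three, Real.dist_eq] <;> norm_num

theorem exists_affineIndependent_unique_sharp_vertex :
    ∃ p : Fin 4 → EuclideanSpace ℝ (Fin 3), AffineIndependent ℝ p ∧
      ∃! i : Fin 4,
        2 * π - ∑ jk ∈ Finset.univ.filter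
            (fun jk : Fin 4 × Fin 4 => jk.1 < jk.2 ∧ jk.1 ≠ i ∧ jk.2 ≠ i),
          ∠ (p jk.1) (p i) (p jk.2) ≥ π := by
  set p := spikeTetrahedron
  obtain ⟨d₀₁, d₁₂, d₂₀⟩ := dist_spikeTetrahedron_base
  obtain ⟨d₃₀, d₃₁, d₃₂⟩ := dist_spikeTetrahedron_apex
  have h₀₁ : p 0 ≠ p 1 := by rw [← dist_pos, d₀₁]; positivity
  obtain ⟨apex₁₂, apex₂₀, base₀, base₁, base₂⟩ :=
    spike_angles h₀₁ (d₀₁.trans d₁₂.symm) (d₁₂.trans d₂₀.symm) (d₃₀.trans d₃₁.symm)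
      (d₃₁.trans d₃₂.symm)
  have hε : ∠ (p 0) (p 3) (p 1) < π / 3 := by
    refine angle_lt_pi_div_three_of_dist_lt (d₃₀.trans d₃₁.symm) ?_
    rw [d₀₁, d₃₀, sqrt_lt' (by norm_num)]
    norm_num
  refine ⟨p, affineIndependent_spikeTetrahedron, 3, ?_, fun i hi => ?_⟩
  · simp [Finset.sum_filter, Fintype.sum_prod_type, Fin.sum_univ_four]
    linarith [angle_comm (p 0) (p 3) (p 2)]
  · fin_cases i <;> simp [Finset.sum_filter, Fintype.sum_prod_type, Fin.sum_univ_four] at hi ⊢ <;>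
      linarith

theorem spike_tetrahedron_one_sharp_general
    (v₁ v₂ v₃ v₄ : EuclideanSpace ℝ (Fin 3)) (s : ℝ) (hs : 0 < s)
    (h12 : dist v₁ v₂ = s) (h23 : dist v₂ v₃ = s) (h31 : dist v₃ v₁ = s)
    (heq : dist v₄ v₁ = dist v₄ v₂ ∧ dist v₄ v₂ = dist v₄ v₃)
    (ε : ℝ) (hε : ε = ∠ v₁ v₄ v₂) :
    (∠ v₁ v₄ v₂ = ε ∧ ∠ v₂ v₄ v₃ = ε ∧ ∠ v₃ v₄ v₁ = ε) ∧
    (2 * π - (∠ v₁ v₄ v₂ + ∠ v₂ v₄ v₃ + ∠ v₃ v₄ v₁) = 2 * π - 3 * ε) ∧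
    (2 * π - (∠ v₂ v₁ v₃ + ∠ v₂ v₁ v₄ + ∠ v₃ v₁ v₄) = 2 * π / 3 + ε) ∧
    (2 * π - (∠ v₁ v₂ v₃ + ∠ v₁ v₂ v₄ + ∠ v₃ v₂ v₄) = 2 * π / 3 + ε) ∧
    (2 * π - (∠ v₁ v₃ v₂ + ∠ v₁ v₃ v₄ + ∠ v₂ v₃ v₄) = 2 * π / 3 + ε) ∧
    (0 < ε → ε < π / 3 →
      (2 * π - (∠ v₁ v₄ v₂ + ∠ v₂ v₄ v₃ + ∠ v₃ v₄ v₁) ≥ π ∧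
       2 * π - (∠ v₂ v₁ v₃ + ∠ v₂ v₁ v₄ + ∠ v₃ v₁ v₄) < π ∧
       2 * π - (∠ v₁ v₂ v₃ + ∠ v₁ v₂ v₄ + ∠ v₃ v₂ v₄) < π ∧
       2 * π - (∠ v₁ v₃ v₂ + ∠ v₁ v₃ v₄ + ∠ v₂ v₃ v₄) < π)) ∧
    (∃ p : Fin 4 → EuclideanSpace ℝ (Fin 3), AffineIndependent ℝ p ∧
      ∃! i : Fin 4,
        2 * π - ∑ jk ∈ Finset.univ.filter
            (fun jk : Fin 4 × Fin 4 => jk.1 < jk.2 ∧ jk.1 ≠ i ∧ jk.2 ≠ i),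
          ∠ (p jk.1) (p i) (p jk.2) ≥ π) := by
  subst hε
  have h₁₂ : v₁ ≠ v₂ := dist_pos.1 (h12 ▸ hs)
  obtain ⟨apex₂₃, apex₃₁, base₁, base₂, base₃⟩ :=
    spike_angles h₁₂ (h12.trans h23.symm) (h23.trans h31.symm) heq.1 heq.2
  refine ⟨⟨rfl, apex₂₃, apex₃₁⟩, by rw [apex₂₃, apex₃₁]; ring, by rw [base₁]; ring,
    by rw [base₂]; ring, by rw [base₃]; ring,
    fun _ hε => ⟨by linarith, by linarith, by linarith, by linarith⟩,
    exists_affineIndependent_unique_sharp_vertex⟩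

/-- A tall "spike" tetrahedron over an equilateral base: the three apex face
angles are equal to `ε`, the angle deficit at the apex is `2π − 3ε`, the angle
deficit at each base vertex is `2π/3 + ε`; hence for `0 < ε < π/3` the apex is
the unique sharp vertex, and in particular there is a tetrahedron with exactly
one vertex of angle deficit at least `π`. -/
theorem spike_tetrahedron_one_sharp
    (v₁ v₂ v₃ v₄ : EuclideanSpace ℝ (Fin 3)) (s : ℝ) (hs : 0 < s)
    (h12 : dist v₁ v₂ = s) (h23 : dist v₂ v₃ = s) (h31 : dist v₃ v₁ = s)
    (hv₄ : v₄ ∉ affineSpan ℝ ({v₁, v₂, v₃} : Set (EuclideanSpace ℝ (Fin 3))))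
    (heq : dist v₄ v₁ = dist v₄ v₂ ∧ dist v₄ v₂ = dist v₄ v₃)
    (ε : ℝ) (hε : ε = ∠ v₁ v₄ v₂) :
    (∠ v₁ v₄ v₂ = ε ∧ ∠ v₂ v₄ v₃ = ε ∧ ∠ v₃ v₄ v₁ = ε) ∧
    (2 * π - (∠ v₁ v₄ v₂ + ∠ v₂ v₄ v₃ + ∠ v₃ v₄ v₁) = 2 * π - 3 * ε) ∧
    (2 * π - (∠ v₂ v₁ v₃ + ∠ v₂ v₁ v₄ + ∠ v₃ v₁ v₄) = 2 * π / 3 + ε) ∧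
    (2 * π - (∠ v₁ v₂ v₃ + ∠ v₁ v₂ v₄ + ∠ v₃ v₂ v₄) = 2 * π / 3 + ε) ∧
    (2 * π - (∠ v₁ v₃ v₂ + ∠ v₁ v₃ v₄ + ∠ v₂ v₃ v₄) = 2 * π / 3 + ε) ∧
    (0 < ε → ε < π / 3 →
      (2 * π - (∠ v₁ v₄ v₂ + ∠ v₂ v₄ v₃ + ∠ v₃ v₄ v₁) ≥ π ∧
       2 * π - (∠ v₂ v₁ v₃ + ∠ v₂ v₁ v₄ + ∠ v₃ v₁ v₄) < π ∧
       2 * π - (∠ v₁ v₂ v₃ + ∠ v₁ v₂ v₄ + ∠ v₃ v₂ v₄) < π ∧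
       2 * π - (∠ v₁ v₃ v₂ + ∠ v₁ v₃ v₄ + ∠ v₂ v₃ v₄) < π)) ∧
    (∃ p : Fin 4 → EuclideanSpace ℝ (Fin 3), AffineIndependent ℝ p ∧
      ∃! i : Fin 4,
        2 * π - ∑ jk ∈ Finset.univ.filter
            (fun jk : Fin 4 × Fin 4 => jk.1 < jk.2 ∧ jk.1 ≠ i ∧ jk.2 ≠ i),
          ∠ (p jk.1) (p i) (p jk.2) ≥ π) :=
  spike_tetrahedron_one_sharp_general v₁ v₂ v₃ v₄ s hs h12 h23 h31 heq ε hε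
end

section
/- Let n ≥ 4 be a natural number and α : Fin n → ℝ satisfy 0 < α i < π for all i and Σᵢ α i = (n − 2)π. Suppose S₁ and S₂ are disjoint subsets of Fin n such that each Sₘ (m = 1, 2) is either a 3-element set with Σ_{i ∈ Sₘ} α i ≤ 2π, or a 2-element set with Σ_{i ∈ Sₘ} α i ≤ π. Then n ≤ 6. -/
open Real

/-- If a convex polygon with `n ≥ 4` vertices has two disjoint vertex sets,
each either three vertices with angle sum at most `2π` or two vertices with
angle sum at most `π`, then `n ≤ 6`. -/
theorem I_gluing_hexagon_bound (n : ℕ) (hn : 4 ≤ n) (α : Fin n → ℝ)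
    (hpos : ∀ i, 0 < α i) (hlt : ∀ i, α i < π)
    (hsum : ∑ i, α i = ((n : ℝ) - 2) * π)
    (S₁ S₂ : Finset (Fin n)) (hdisj : Disjoint S₁ S₂)
    (h₁ : (S₁.card = 3 ∧ ∑ i ∈ S₁, α i ≤ 2 * π) ∨
          (S₁.card = 2 ∧ ∑ i ∈ S₁, α i ≤ π))
    (h₂ : (S₂.card = 3 ∧ ∑ i ∈ S₂, α i ≤ 2 * π) ∨
          (S₂.card = 2 ∧ ∑ i ∈ S₂, α i ≤ π)) :
    n ≤ 6 := by
  by_contra hcon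
  push_neg at hcon
  -- cardinalities of S₁ and S₂ are at most 3
  have hc₁ : S₁.card ≤ 3 := by rcases h₁ with ⟨h, _⟩ | ⟨h, _⟩ <;> omega
  have hc₂ : S₂.card ≤ 3 := by rcases h₂ with ⟨h, _⟩ | ⟨h, _⟩ <;> omega
  have hcard : (S₁ ∪ S₂).card = S₁.card + S₂.card := Finset.card_union_of_disjoint hdisj
  set T : Finset (Fin n) := (S₁ ∪ S₂)ᶜ with hT
  have hTc : T.card = n - (S₁.card + S₂.card) := by
    rw [hT, Finset.card_compl, hcard, Fintype.card_fin]
  have hTne : T.Nonempty := by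
    rw [← Finset.card_pos, hTc]; omega
  have hTsum : ∑ i ∈ T, α i < (T.card : ℝ) * π := by
    calc ∑ i ∈ T, α i < ∑ _i ∈ T, π :=
          Finset.sum_lt_sum_of_nonempty hTne (fun i _ => hlt i)
      _ = (T.card : ℝ) * π := by rw [Finset.sum_const, nsmul_eq_mul]
  have hsplit : ∑ i, α i = ∑ i ∈ S₁, α i + ∑ i ∈ S₂, α i + ∑ i ∈ T, α i := by
    rw [← Finset.sum_union hdisj, ← Finset.sum_add_sum_compl (S₁ ∪ S₂) α]
  have hπ : (0 : ℝ) < π := Real.pi_pos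
  have hN : (7 : ℝ) ≤ (n : ℝ) := by exact_mod_cast hcon
  have hk : S₁.card + S₂.card ≤ n := by omega
  have hTcr : (T.card : ℝ) = (n : ℝ) - ((S₁.card : ℝ) + (S₂.card : ℝ)) := by
    rw [hTc, Nat.cast_sub hk]; push_cast; ring
  rcases h₁ with ⟨hc1, hs1⟩ | ⟨hc1, hs1⟩ <;> rcases h₂ with ⟨hc2, hs2⟩ | ⟨hc2, hs2⟩ <;>
  · rw [hc1, hc2] at hTcr
    rw [hTcr] at hTsum
    rw [hsplit] at hsum
    push_cast at hTsum
    nlinarith [hTsum, hs1, hs2, hπ, hN, hsum]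
end

section
/- Let L, W > 0 be real numbers, and for x ∈ [0, L/4) define u(x) = √(x² + W²) and v(x) = √((L/2 − x)² + W²). Then u(x) < v(x) for every x ∈ [0, L/4), and for any two distinct a, b ∈ [0, L/4) the unordered pairs {u(a), v(a)} and {u(b), v(b)} are distinct. Consequently, the set of unordered pairs { {u(x), v(x)} : x ∈ [0, L/4) } is uncountable. -/
open Real

private lemma sqrt_lt_sqrt_of_mem {L W : ℝ} (hW : 0 < W) {x : ℝ}
    (hx : x ∈ Set.Ico (0 : ℝ) (L / 4)) :
    Real.sqrt (x ^ 2 + W ^ 2) < Real.sqrt ((L / 2 - x) ^ 2 + W ^ 2) := by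
  obtain ⟨hx0, hx4⟩ := hx
  have hxl : x < L / 2 - x := by linarith
  have h1 : x ^ 2 < (L / 2 - x) ^ 2 := by nlinarith
  have := sq_nonneg x
  exact Real.sqrt_lt_sqrt (by positivity) (by linarith)

private lemma u_inj {W : ℝ} (hW : 0 < W) {a b : ℝ} (ha : 0 ≤ a) (hb : 0 ≤ b)
    (h : Real.sqrt (a ^ 2 + W ^ 2) = Real.sqrt (b ^ 2 + W ^ 2)) : a = b := by
  have h1 : a ^ 2 + W ^ 2 = b ^ 2 + W ^ 2 := by
    have ha' : (0:ℝ) ≤ a ^ 2 + W ^ 2 := by positivity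
    have hb' : (0:ℝ) ≤ b ^ 2 + W ^ 2 := by positivity
    rw [← Real.sq_sqrt ha', ← Real.sq_sqrt hb', h]
  nlinarith

private lemma pair_inj {L W : ℝ} (hL : 0 < L) (hW : 0 < W) :
    ∀ a ∈ Set.Ico (0 : ℝ) (L / 4), ∀ b ∈ Set.Ico (0 : ℝ) (L / 4),
      ({Real.sqrt (a ^ 2 + W ^ 2), Real.sqrt ((L / 2 - a) ^ 2 + W ^ 2)} : Set ℝ) =
      ({Real.sqrt (b ^ 2 + W ^ 2), Real.sqrt ((L / 2 - b) ^ 2 + W ^ 2)} : Set ℝ) → a = b := by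
  intro a ha b hb h
  have hab := sqrt_lt_sqrt_of_mem (L := L) hW ha
  have hbb := sqrt_lt_sqrt_of_mem (L := L) hW hb
  have hma : Real.sqrt (a ^ 2 + W ^ 2) ∈
      ({Real.sqrt (b ^ 2 + W ^ 2), Real.sqrt ((L / 2 - b) ^ 2 + W ^ 2)} : Set ℝ) := by
    rw [← h]; exact Set.mem_insert _ _
  have hmb : Real.sqrt (b ^ 2 + W ^ 2) ∈
      ({Real.sqrt (a ^ 2 + W ^ 2), Real.sqrt ((L / 2 - a) ^ 2 + W ^ 2)} : Set ℝ) := by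
    rw [h]; exact Set.mem_insert _ _
  rcases hma with h1 | h1
  · exact u_inj hW ha.1 hb.1 h1
  · rcases hmb with h2 | h2
    · exact (u_inj hW ha.1 hb.1 h2.symm)
    · exfalso
      rw [Set.mem_singleton_iff] at h1 h2
      rw [h1, ← h2] at hab
      exact absurd (hab.trans hbb) (lt_irrefl _)

/-- Folding an `L × W` rectangle with twist `x ∈ [0, L/4)` yields tetrahedron
edge lengths `u(x) = √(x² + W²) < v(x) = √((L/2 − x)² + W²)`; distinct twists
give distinct unordered pairs `{u(x), v(x)}`, so the family of such pairs is
uncountable. -/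
theorem rectangle_twist_tetrahedra_uncountable (L W : ℝ) (hL : 0 < L) (hW : 0 < W) :
    (∀ x ∈ Set.Ico (0 : ℝ) (L / 4),
      Real.sqrt (x ^ 2 + W ^ 2) < Real.sqrt ((L / 2 - x) ^ 2 + W ^ 2)) ∧
    (∀ a ∈ Set.Ico (0 : ℝ) (L / 4), ∀ b ∈ Set.Ico (0 : ℝ) (L / 4), a ≠ b →
      ({Real.sqrt (a ^ 2 + W ^ 2), Real.sqrt ((L / 2 - a) ^ 2 + W ^ 2)} : Set ℝ) ≠
      ({Real.sqrt (b ^ 2 + W ^ 2), Real.sqrt ((L / 2 - b) ^ 2 + W ^ 2)} : Set ℝ)) ∧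
    ¬ (Set.Countable { s : Set ℝ | ∃ x ∈ Set.Ico (0 : ℝ) (L / 4),
        s = ({Real.sqrt (x ^ 2 + W ^ 2),
              Real.sqrt ((L / 2 - x) ^ 2 + W ^ 2)} : Set ℝ) }) := by
  refine ⟨fun x hx => sqrt_lt_sqrt_of_mem hW hx,
    fun a ha b hb hne h => hne (pair_inj hL hW a ha b hb h), ?_⟩
  intro hc
  set f : ℝ → Set ℝ := fun x =>
    ({Real.sqrt (x ^ 2 + W ^ 2), Real.sqrt ((L / 2 - x) ^ 2 + W ^ 2)} : Set ℝ) with hf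
  have himg : { s : Set ℝ | ∃ x ∈ Set.Ico (0 : ℝ) (L / 4), s = f x } =
      f '' Set.Ico (0 : ℝ) (L / 4) := by
    ext s; simp [Set.mem_image, eq_comm]
  rw [himg] at hc
  have hinj : Set.InjOn f (Set.Ico (0 : ℝ) (L / 4)) :=
    fun a ha b hb h => pair_inj hL hW a ha b hb h
  have hIco : (Set.Ico (0 : ℝ) (L / 4)).Countable :=
    Set.countable_of_injective_of_countable_image hinj hc
  have h4 : (0 : ℝ) < L / 4 := by linarith
  have := Cardinal.mk_Ico_real h4
  rw [Set.countable_iff_exists_injective] at hIco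
  have : ¬ (Set.Ico (0 : ℝ) (L / 4)).Countable := by
    intro hcc
    have := hcc.le_aleph0
    rw [Cardinal.mk_Ico_real h4] at this
    exact absurd this (not_le.mpr Cardinal.aleph0_lt_continuum)
  exact this (Set.countable_iff_exists_injective.mpr hIco)
end
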